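/- Let Y be a positive random variable satisfying lim_{y→∞} y^2 P(Y ≥ y) = 1, and let I_2(u) = E[Y^2 e^{-uY}]. Then I_2(u) = -2 log u + o(log(1/u)) as u → 0^+, i.e. lim_{u→0^+} I_2(u)/(2 log(1/u)) = 1. -/

import Mathlib

/-!
By the layer-cake formula for `G(y) = y² e^{-uy}`, with `φ(t) = P(Y ≥ t)`,
`I₂(u) = 2 ∫₀^∞ t φ(t) e^{-ut} dt - u ∫₀^∞ t² φ(t) e^{-ut} dt`.
Since `t² φ(t)` is bounded, the second term is `O(1)`. In the first, `t φ(t) ~ 1/t`, and the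
Laplace transform of a bounded function that behaves like `c/t` at infinity is
`c log(1/u) + o(log(1/u))`: compare with `∫₁^∞ e^{-ut}/t dt = log(1/u) + O(1)`, the error
`o(1/t)` contributing `o(log(1/u))`.
-/

open MeasureTheory Filter Real Set Asymptotics Topology

theorem integral_exp_neg_mul_Ioi (c : ℝ) {u : ℝ} (hu : 0 < u) :
    ∫ t in Ioi c, exp (-u * t) = exp (-u * c) / u := by
  rw [integral_exp_mul_Ioi (neg_neg_iff_pos.2 hu), neg_div_neg_eq]

theorem integrableOn_mul_exp_neg_mul {f : ℝ → ℝ} {a u C : ℝ} (hu : 0 < u)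
    (hf : AEStronglyMeasurable f (volume.restrict (Ioi a))) (hC : ∀ t ∈ Ioi a, |f t| ≤ C) :
    IntegrableOn (fun t => f t * exp (-u * t)) (Ioi a) := by
  refine ((exp_neg_integrableOn_Ioi a hu).const_mul C).mono'
    (hf.mul (by fun_prop : Continuous fun t : ℝ => exp (-u * t)).aestronglyMeasurable) ?_
  filter_upwards [ae_restrict_mem measurableSet_Ioi] with t ht
  rw [norm_mul, Real.norm_eq_abs, Real.norm_of_nonneg (exp_pos _).le]
  exact mul_le_mul_of_nonneg_right (hC t ht) (exp_pos _).le

theorem integrableOn_inv_mul_exp_neg_mul {a u : ℝ} (ha : 0 < a) (hu : 0 < u) :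
    IntegrableOn (fun t => t⁻¹ * exp (-u * t)) (Ioi a) :=
  integrableOn_mul_exp_neg_mul hu measurable_inv.aestronglyMeasurable fun t ht => by
    rw [abs_of_pos (inv_pos.2 (ha.trans ht))]
    exact inv_anti₀ ha (le_of_lt ht)

/-- Split at `t = 1/u`: below it `e^{-ut}/t` is within `u` of `1/t`, above it is at most
`u e^{-ut}`. -/
theorem abs_integral_inv_mul_exp_neg_mul_sub_log_le {u : ℝ} (hu : 0 < u) (hu1 : u ≤ 1) :
    |(∫ t in Ioi 1, t⁻¹ * exp (-u * t)) - log (1 / u)| ≤ 2 := by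
  set T := 1 / u with hT
  have hT1 : 1 ≤ T := by rw [hT, le_div_iff₀ hu]; linarith
  have hT0 : 0 < T := one_pos.trans_le hT1
  have hint := integrableOn_inv_mul_exp_neg_mul one_pos hu
  have hlog : ∫ t in (1 : ℝ)..T, t⁻¹ = log T := by
    rw [integral_inv_of_pos one_pos hT0, div_one]
  have hnear : |(∫ t in (1 : ℝ)..T, t⁻¹ * exp (-u * t)) - log T| ≤ 1 := by
    have hpos : ∀ t ∈ uIcc 1 T, t ≠ 0 := fun t ht =>
      (one_pos.trans_le (by rw [uIcc_of_le hT1] at ht; exact ht.1)).ne'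
    rw [← hlog, ← intervalIntegral.integral_sub
      (ContinuousOn.intervalIntegrable (by fun_prop (disch := exact hpos)))
      (ContinuousOn.intervalIntegrable (by fun_prop (disch := exact hpos)))]
    calc |∫ t in (1 : ℝ)..T, (t⁻¹ * exp (-u * t) - t⁻¹)| ≤ u * |T - 1| := by
          rw [← Real.norm_eq_abs]
          refine intervalIntegral.norm_integral_le_of_norm_le_const fun t ht => ?_
          rw [uIoc_of_le hT1] at ht
          have ht0 : 0 < t := one_pos.trans ht.1
          have hexp : 1 - u * t ≤ exp (-u * t) := by linarith [add_one_le_exp (-u * t)]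
          have hexp1 : exp (-u * t) ≤ 1 := exp_le_one_iff.2 (by nlinarith)
          rw [Real.norm_eq_abs, abs_sub_comm, abs_of_nonneg (by nlinarith [inv_pos.2 ht0])]
          calc t⁻¹ - t⁻¹ * exp (-u * t) = t⁻¹ * (1 - exp (-u * t)) := by ring
            _ ≤ t⁻¹ * (u * t) := by gcongr; linarith
            _ = u := by field_simp
      _ ≤ 1 := by
          rw [abs_of_nonneg (by linarith), mul_sub, hT, mul_one_div_cancel hu.ne']
          linarith
  have hfar_nonneg : 0 ≤ ∫ t in Ioi T, t⁻¹ * exp (-u * t) :=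
    setIntegral_nonneg measurableSet_Ioi fun t ht =>
      mul_nonneg (inv_nonneg.2 (hT0.trans ht).le) (exp_pos _).le
  have hfar_le : ∫ t in Ioi T, t⁻¹ * exp (-u * t) ≤ 1 :=
    calc ∫ t in Ioi T, t⁻¹ * exp (-u * t) ≤ ∫ t in Ioi T, u * exp (-u * t) := by
          refine setIntegral_mono_on (hint.mono_set (Ioi_subset_Ioi hT1))
            ((exp_neg_integrableOn_Ioi T hu).const_mul u) measurableSet_Ioi fun t ht => ?_
          refine mul_le_mul_of_nonneg_right ?_ (exp_pos _).le
          rw [inv_le_comm₀ (hT0.trans ht) hu, ← one_div]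
          exact le_of_lt ht
      _ = exp (-1) := by
          rw [integral_const_mul, integral_exp_neg_mul_Ioi T hu, hT]
          field_simp
      _ ≤ 1 := exp_le_one_iff.2 (by norm_num)
  rw [← intervalIntegral.integral_interval_add_Ioi hint (hint.mono_set (Ioi_subset_Ioi hT1))]
  rw [abs_le] at hnear ⊢
  constructor <;> linarith [hnear.1, hnear.2]

theorem tendsto_log_one_div_nhdsGT_zero : Tendsto (fun u => log (1 / u)) (𝓝[>] 0) atTop := by
  simp only [one_div, log_inv]
  exact tendsto_neg_atBot_atTop.comp tendsto_log_nhdsGT_zero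

theorem isLittleO_log_one_div_of_abs_le {F : ℝ → ℝ} {C : ℝ}
    (hF : ∀ᶠ u in 𝓝[>] 0, |F u| ≤ C) : F =o[𝓝[>] 0] fun u => log (1 / u) :=
  (isBigO_one_iff ℝ |>.2 (isBoundedUnder_of_eventually_le hF)).trans_isLittleO <|
    isLittleO_one_left_iff ℝ |>.2 <|
      tendsto_norm_atTop_atTop.comp tendsto_log_one_div_nhdsGT_zero

theorem norm_intervalIntegral_mul_exp_neg_mul_le {g : ℝ → ℝ} {a b u K : ℝ} (ha : 0 ≤ a)
    (hab : a ≤ b) (hu : 0 ≤ u) (hK : ∀ t ∈ Ioc a b, |g t| ≤ K) :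
    ‖∫ t in a..b, g t * exp (-u * t)‖ ≤ K * (b - a) := by
  refine (intervalIntegral.norm_integral_le_of_norm_le_const fun t ht => ?_).trans_eq
    (by rw [abs_of_nonneg (sub_nonneg.2 hab)])
  rw [uIoc_of_le hab] at ht
  rw [norm_mul, Real.norm_eq_abs, Real.norm_of_nonneg (exp_pos _).le]
  have : exp (-u * t) ≤ 1 := exp_le_one_iff.2 (by nlinarith [ht.1])
  exact (mul_le_of_le_one_right (abs_nonneg _) this).trans (hK t ht)

theorem norm_integral_Ioi_mul_exp_neg_mul_le {g : ℝ → ℝ} {M u δ : ℝ} (hM : 1 ≤ M) (hu : 0 < u)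
    (hu1 : u ≤ 1) (hδ : ∀ t ∈ Ioi M, |t * g t| ≤ δ) :
    ‖∫ t in Ioi M, g t * exp (-u * t)‖ ≤ δ * (log (1 / u) + 2) := by
  have hδ0 : 0 ≤ δ := (abs_nonneg _).trans (hδ (M + 1) (by simp))
  calc ‖∫ t in Ioi M, g t * exp (-u * t)‖ ≤ ∫ t in Ioi M, δ * (t⁻¹ * exp (-u * t)) := by
        refine norm_integral_le_of_norm_le
          ((integrableOn_inv_mul_exp_neg_mul (one_pos.trans_le hM) hu).const_mul _) ?_
        filter_upwards [ae_restrict_mem measurableSet_Ioi] with t (ht : M < t)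
        have ht0 : 0 < t := one_pos.trans_le (hM.trans ht.le)
        rw [norm_mul, Real.norm_eq_abs, Real.norm_of_nonneg (exp_pos _).le, ← mul_assoc]
        refine mul_le_mul_of_nonneg_right ?_ (exp_pos _).le
        have := hδ t ht
        rw [abs_mul, abs_of_pos ht0] at this
        rw [le_mul_inv_iff₀ ht0]
        linarith
    _ ≤ δ * ∫ t in Ioi 1, t⁻¹ * exp (-u * t) := by
        rw [integral_const_mul]
        refine mul_le_mul_of_nonneg_left (setIntegral_mono_set
          (integrableOn_inv_mul_exp_neg_mul one_pos hu) ?_ (Ioi_subset_Ioi hM).eventuallyLE) hδ0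
        filter_upwards [ae_restrict_mem measurableSet_Ioi] with t (ht : 1 < t)
        exact mul_nonneg (inv_nonneg.2 (one_pos.trans ht).le) (exp_pos _).le
    _ ≤ δ * (log (1 / u) + 2) := by
        gcongr
        linarith [(abs_le.1 (abs_integral_inv_mul_exp_neg_mul_sub_log_le hu hu1)).2]

theorem isLittleO_integral_Ioi_one_mul_exp_neg_mul {g : ℝ → ℝ} {K : ℝ} (hg : Measurable g)
    (hK : ∀ t ∈ Ioi 1, |g t| ≤ K) (hlim : Tendsto (fun t => t * g t) atTop (𝓝 0)) :
    (fun u => ∫ t in Ioi 1, g t * exp (-u * t)) =o[𝓝[>] 0] fun u => log (1 / u) := by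
  have hK0 : 0 ≤ K := (abs_nonneg _).trans (hK 2 (by norm_num))
  rw [isLittleO_iff]
  intro ε hε
  obtain ⟨M₀, hM₀⟩ := eventually_atTop.1 ((Metric.tendsto_nhds.1 hlim) (ε / 2) (half_pos hε))
  set M := max M₀ 1
  have hM1 : 1 ≤ M := le_max_right _ _
  filter_upwards [self_mem_nhdsWithin, nhdsWithin_le_nhds (eventually_le_nhds one_pos),
    tendsto_log_one_div_nhdsGT_zero.eventually_ge_atTop (2 * (K * M + ε) / ε)]
    with u (hu : 0 < u) hu1 hL
  have hint := integrableOn_mul_exp_neg_mul hu hg.aestronglyMeasurable hK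
  have hnear := norm_intervalIntegral_mul_exp_neg_mul_le zero_le_one hM1 hu.le
    fun t ht => hK t ht.1
  have hfar := norm_integral_Ioi_mul_exp_neg_mul_le hM1 hu hu1 fun t (ht : M < t) => by
    simpa [Real.dist_eq] using (hM₀ t ((le_max_left _ _).trans ht.le)).le
  rw [← intervalIntegral.integral_interval_add_Ioi hint (hint.mono_set (Ioi_subset_Ioi hM1)),
    Real.norm_of_nonneg (le_trans (by positivity) hL)]
  rw [div_le_iff₀ hε] at hL
  calc _ ≤ ‖∫ t in (1 : ℝ)..M, g t * exp (-u * t)‖ + ‖∫ t in Ioi M, g t * exp (-u * t)‖ :=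
      norm_add_le _ _
    _ ≤ ε * log (1 / u) := by nlinarith

theorem integral_mul_exp_neg_mul_sub_log_eq {f : ℝ → ℝ} {K : ℝ} (c : ℝ) {u : ℝ} (hu : 0 < u)
    (hf : AEStronglyMeasurable f (volume.restrict (Ioi 0))) (hK : ∀ t ∈ Ioi 0, |f t| ≤ K) :
    (∫ t in Ioi 0, f t * exp (-u * t)) - c * log (1 / u)
      = (∫ t in (0 : ℝ)..1, f t * exp (-u * t))
        + (∫ t in Ioi 1, (f t - c * t⁻¹) * exp (-u * t))
        + c * ((∫ t in Ioi 1, t⁻¹ * exp (-u * t)) - log (1 / u)) := by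
  have hint := integrableOn_mul_exp_neg_mul hu hf hK
  have hint₁ := hint.mono_set (Ioi_subset_Ioi zero_le_one)
  have hsplit : ∫ t in Ioi 1, (f t - c * t⁻¹) * exp (-u * t)
      = (∫ t in Ioi 1, f t * exp (-u * t)) - c * ∫ t in Ioi 1, t⁻¹ * exp (-u * t) := by
    rw [← integral_const_mul,
      ← integral_sub hint₁ ((integrableOn_inv_mul_exp_neg_mul one_pos hu).const_mul c)]
    exact integral_congr_ae (ae_of_all _ fun t => by ring)
  rw [hsplit, ← intervalIntegral.integral_interval_add_Ioi hint hint₁]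
  ring

theorem isLittleO_integral_mul_exp_neg_mul_sub_log {f : ℝ → ℝ} {K c : ℝ} (hf : Measurable f)
    (hK : ∀ t ∈ Ioi 0, |f t| ≤ K) (hlim : Tendsto (fun t => t * f t) atTop (𝓝 c)) :
    (fun u => (∫ t in Ioi 0, f t * exp (-u * t)) - c * log (1 / u)) =o[𝓝[>] 0]
      fun u => log (1 / u) := by
  set g : ℝ → ℝ := fun t => f t - c * t⁻¹
  have hgK : ∀ t ∈ Ioi 1, |g t| ≤ K + |c| := fun t (ht : 1 < t) => by
    have ht0 : 0 < t := one_pos.trans ht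
    calc |g t| ≤ |f t| + |c| * t⁻¹ := by
          rw [← abs_of_pos (inv_pos.2 ht0), ← abs_mul]; exact abs_sub _ _
      _ ≤ K + |c| * 1 := by gcongr; exacts [hK t ht0, inv_le_one_of_one_le₀ ht.le]
      _ = K + |c| := by rw [mul_one]
  have hglim : Tendsto (fun t => t * g t) atTop (𝓝 0) := by
    refine (sub_self c ▸ hlim.sub_const c).congr' ?_
    filter_upwards [eventually_gt_atTop 0] with t ht
    simp only [g, mul_sub]
    field_simp
  have hnear : ∀ᶠ u in 𝓝[>] 0, |∫ t in (0 : ℝ)..1, f t * exp (-u * t)| ≤ K * (1 - 0) :=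
    eventually_mem_nhdsWithin.mono fun u (hu : 0 < u) =>
      norm_intervalIntegral_mul_exp_neg_mul_le le_rfl zero_le_one hu.le fun t ht => hK t ht.1
  have htail : ∀ᶠ u in 𝓝[>] 0,
      |c * ((∫ t in Ioi 1, t⁻¹ * exp (-u * t)) - log (1 / u))| ≤ |c| * 2 := by
    filter_upwards [self_mem_nhdsWithin, nhdsWithin_le_nhds (eventually_le_nhds one_pos)]
      with u (hu : 0 < u) hu1
    rw [abs_mul]
    exact mul_le_mul_of_nonneg_left (abs_integral_inv_mul_exp_neg_mul_sub_log_le hu hu1)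
      (abs_nonneg c)
  have hfar := isLittleO_integral_Ioi_one_mul_exp_neg_mul
    (hf.sub (measurable_inv.const_mul c)) hgK hglim
  refine (((isLittleO_log_one_div_of_abs_le hnear).add hfar).add
    (isLittleO_log_one_div_of_abs_le htail)).congr' ?_ EventuallyEq.rfl
  filter_upwards [self_mem_nhdsWithin] with u (hu : 0 < u)
  exact (integral_mul_exp_neg_mul_sub_log_eq c hu hf.aestronglyMeasurable hK).symm

theorem abs_mul_integral_mul_exp_neg_mul_le {h : ℝ → ℝ} {u C : ℝ} (hu : 0 < u)
    (hC : ∀ t ∈ Ioi 0, |h t| ≤ C) :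
    |u * ∫ t in Ioi 0, h t * exp (-u * t)| ≤ C := by
  have hle : ‖∫ t in Ioi 0, h t * exp (-u * t)‖ ≤ ∫ t in Ioi 0, C * exp (-u * t) := by
    refine norm_integral_le_of_norm_le ((exp_neg_integrableOn_Ioi 0 hu).const_mul C) ?_
    filter_upwards [ae_restrict_mem measurableSet_Ioi] with t ht
    rw [norm_mul, Real.norm_eq_abs, Real.norm_of_nonneg (exp_pos _).le]
    exact mul_le_mul_of_nonneg_right (hC t ht) (exp_pos _).le
  rw [integral_const_mul, integral_exp_neg_mul_Ioi 0 hu, mul_zero, exp_zero,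
    Real.norm_eq_abs] at hle
  rw [abs_mul, abs_of_pos hu]
  calc u * |∫ t in Ioi 0, h t * exp (-u * t)| ≤ u * (C * (1 / u)) := by gcongr
    _ = C := by field_simp

section LayerCake

variable {α : Type*} [MeasurableSpace α] {μ : Measure α} {f : α → ℝ} {g : ℝ → ℝ}

theorem intervalIntegral_comp_nonneg (f_nn : 0 ≤ᵐ[μ] f) (g_nn : ∀ t ∈ Ioi 0, 0 ≤ g t) :
    0 ≤ᵐ[μ] fun a => ∫ t in 0..f a, g t := by
  filter_upwards [f_nn] with a (ha : 0 ≤ f a)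
  rw [intervalIntegral.integral_of_le ha]
  exact setIntegral_nonneg measurableSet_Ioc fun t ht => g_nn t ht.1

theorem lintegral_ofReal_intervalIntegral_eq_lintegral_meas_le_mul [IsFiniteMeasure μ]
    (hf : AEMeasurable f μ) (f_nn : 0 ≤ᵐ[μ] f) (hg : Continuous g) (g_nn : ∀ t ∈ Ioi 0, 0 ≤ g t) :
    ∫⁻ a, ENNReal.ofReal (∫ t in 0..f a, g t) ∂μ
      = ∫⁻ t in Ioi 0, ENNReal.ofReal (μ.real {a | t ≤ f a} * g t) := by
  rw [lintegral_comp_eq_lintegral_meas_le_mul μ f_nn hf (fun t _ => hg.intervalIntegrable 0 t)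
    ((ae_restrict_iff' measurableSet_Ioi).2 (ae_of_all _ g_nn))]
  refine setLIntegral_congr_fun measurableSet_Ioi fun t _ => ?_
  rw [ENNReal.ofReal_mul measureReal_nonneg, ofReal_measureReal]

theorem integrable_intervalIntegral_comp [IsFiniteMeasure μ] (hf : AEMeasurable f μ)
    (f_nn : 0 ≤ᵐ[μ] f) (hg : Continuous g) (g_nn : ∀ t ∈ Ioi 0, 0 ≤ g t)
    (hint : IntegrableOn (fun t => μ.real {a | t ≤ f a} * g t) (Ioi 0)) :
    Integrable (fun a => ∫ t in 0..f a, g t) μ := by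
  refine ⟨((intervalIntegral.continuous_primitive (fun a b => hg.intervalIntegrable a b)
    0).measurable.comp_aemeasurable hf).aestronglyMeasurable, ?_⟩
  rw [hasFiniteIntegral_iff_ofReal (intervalIntegral_comp_nonneg f_nn g_nn),
    lintegral_ofReal_intervalIntegral_eq_lintegral_meas_le_mul hf f_nn hg g_nn]
  exact hint.lintegral_lt_top

theorem integral_intervalIntegral_comp_eq_integral_meas_le_mul [IsFiniteMeasure μ]
    (hf : AEMeasurable f μ) (f_nn : 0 ≤ᵐ[μ] f) (hg : Continuous g) (g_nn : ∀ t ∈ Ioi 0, 0 ≤ g t)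
    (hint : IntegrableOn (fun t => μ.real {a | t ≤ f a} * g t) (Ioi 0)) :
    ∫ a, (∫ t in 0..f a, g t) ∂μ = ∫ t in Ioi 0, μ.real {a | t ≤ f a} * g t := by
  rw [integral_eq_lintegral_of_nonneg_ae (intervalIntegral_comp_nonneg f_nn g_nn)
      (integrable_intervalIntegral_comp hf f_nn hg g_nn hint).aestronglyMeasurable,
    integral_eq_lintegral_of_nonneg_ae ?_ hint.aestronglyMeasurable,
    lintegral_ofReal_intervalIntegral_eq_lintegral_meas_le_mul hf f_nn hg g_nn]
  filter_upwards [ae_restrict_mem measurableSet_Ioi] with t ht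
  exact mul_nonneg measureReal_nonneg (g_nn t ht)

theorem integral_intervalIntegral_sub_comp_eq_integral_meas_le_mul [IsFiniteMeasure μ]
    (hf : AEMeasurable f μ) (f_nn : 0 ≤ᵐ[μ] f) {g₁ g₂ : ℝ → ℝ} (hg₁ : Continuous g₁)
    (hg₂ : Continuous g₂) (g₁_nn : ∀ t ∈ Ioi 0, 0 ≤ g₁ t) (g₂_nn : ∀ t ∈ Ioi 0, 0 ≤ g₂ t)
    (hint₁ : IntegrableOn (fun t => μ.real {a | t ≤ f a} * g₁ t) (Ioi 0))
    (hint₂ : IntegrableOn (fun t => μ.real {a | t ≤ f a} * g₂ t) (Ioi 0)) :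
    ∫ a, (∫ t in 0..f a, (g₁ t - g₂ t)) ∂μ
      = ∫ t in Ioi 0, μ.real {a | t ≤ f a} * (g₁ t - g₂ t) := by
  simp_rw [mul_sub,
    intervalIntegral.integral_sub (hg₁.intervalIntegrable _ _) (hg₂.intervalIntegrable _ _)]
  rw [integral_sub (integrable_intervalIntegral_comp hf f_nn hg₁ g₁_nn hint₁)
      (integrable_intervalIntegral_comp hf f_nn hg₂ g₂_nn hint₂),
    integral_sub hint₁ hint₂,
    integral_intervalIntegral_comp_eq_integral_meas_le_mul hf f_nn hg₁ g₁_nn hint₁,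
    integral_intervalIntegral_comp_eq_integral_meas_le_mul hf f_nn hg₂ g₂_nn hint₂]

end LayerCake

theorem measurable_measureReal_setOf_le {α : Type*} [MeasurableSpace α] {μ : Measure α}
    [IsFiniteMeasure μ] {f : α → ℝ} : Measurable fun t => μ.real {a | t ≤ f a} :=
  Antitone.measurable fun _ _ hst => measureReal_mono fun _ ha => hst.trans ha

theorem hasDerivAt_sq_mul_exp_neg_mul (u t : ℝ) :
    HasDerivAt (fun s => s ^ 2 * exp (-u * s))
      (2 * t * exp (-u * t) - u * t ^ 2 * exp (-u * t)) t := by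
  have hpow : HasDerivAt (fun s : ℝ => s ^ 2) (2 * t) t := by simpa using hasDerivAt_pow 2 t
  have hexp : HasDerivAt (fun s => exp (-u * s)) (exp (-u * t) * -u) t := by
    simpa using ((hasDerivAt_id t).const_mul (-u)).exp
  exact (hpow.mul hexp).congr_deriv (by ring)

theorem sq_mul_exp_neg_mul_eq_intervalIntegral (u x : ℝ) :
    x ^ 2 * exp (-u * x) = ∫ t in 0..x, (2 * t * exp (-u * t) - u * t ^ 2 * exp (-u * t)) := by
  rw [intervalIntegral.integral_eq_sub_of_hasDerivAt (fun t _ => hasDerivAt_sq_mul_exp_neg_mul u t)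
    (Continuous.intervalIntegrable (by fun_prop) _ _)]
  simp

theorem integral_sq_mul_exp_neg_mul_eq {α : Type*} [MeasurableSpace α] {μ : Measure α}
    [IsFiniteMeasure μ] {f : α → ℝ} (hf : AEMeasurable f μ) (f_nn : 0 ≤ᵐ[μ] f) {u K C : ℝ}
    (hu : 0 < u) (hK : ∀ t ∈ Ioi 0, |t * μ.real {a | t ≤ f a}| ≤ K)
    (hC : ∀ t ∈ Ioi 0, |t ^ 2 * μ.real {a | t ≤ f a}| ≤ C) :
    ∫ a, f a ^ 2 * exp (-u * f a) ∂μ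
      = 2 * (∫ t in Ioi 0, t * μ.real {a | t ≤ f a} * exp (-u * t))
        - u * ∫ t in Ioi 0, t ^ 2 * μ.real {a | t ≤ f a} * exp (-u * t) := by
  have hφ := measurable_measureReal_setOf_le (μ := μ) (f := f)
  have h₁ : IntegrableOn (fun t => t * μ.real {a | t ≤ f a} * exp (-u * t)) (Ioi 0) :=
    integrableOn_mul_exp_neg_mul hu (measurable_id.mul hφ).aestronglyMeasurable hK
  have h₂ : IntegrableOn (fun t => t ^ 2 * μ.real {a | t ≤ f a} * exp (-u * t)) (Ioi 0) :=
    integrableOn_mul_exp_neg_mul hu ((measurable_id.pow_const 2).mul hφ).aestronglyMeasurable hC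
  rw [integral_congr_ae (ae_of_all _ fun a => sq_mul_exp_neg_mul_eq_intervalIntegral u (f a)),
    integral_intervalIntegral_sub_comp_eq_integral_meas_le_mul hf f_nn (by fun_prop)
      (by fun_prop) (fun t ht => by have : 0 < t := ht; positivity)
      (fun t ht => by have : 0 < t := ht; positivity)
      (IntegrableOn.congr_fun (h₁.const_mul 2) (fun t _ => by ring) measurableSet_Ioi)
      (IntegrableOn.congr_fun (h₂.const_mul u) (fun t _ => by ring) measurableSet_Ioi),
    ← integral_const_mul, ← integral_const_mul,
    ← integral_sub (h₁.const_mul 2) (h₂.const_mul u)]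
  exact integral_congr_ae (ae_of_all _ fun t => by ring)

theorem exists_abs_sq_mul_le {φ : ℝ → ℝ} {c : ℝ} (hφ : ∀ t, |φ t| ≤ 1)
    (hlim : Tendsto (fun t => t ^ 2 * φ t) atTop (𝓝 c)) :
    ∃ C, ∀ t ∈ Ioi 0, |t ^ 2 * φ t| ≤ C := by
  obtain ⟨M, hM⟩ := eventually_atTop.1 (hlim.abs.eventually (gt_mem_nhds (lt_add_one |c|)))
  refine ⟨|c| + 1 + M ^ 2, fun t (ht : 0 < t) => ?_⟩
  rcases le_or_gt M t with hMt | htM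
  · linarith [hM t hMt, sq_nonneg M]
  · rw [abs_mul, abs_of_pos (pow_pos ht 2)]
    nlinarith [hφ t, abs_nonneg (φ t), abs_nonneg c]

theorem abs_mul_le_of_abs_sq_mul_le {φ : ℝ → ℝ} {C : ℝ} (hφ : ∀ t, |φ t| ≤ 1)
    (hC : ∀ t ∈ Ioi 0, |t ^ 2 * φ t| ≤ C) : ∀ t ∈ Ioi 0, |t * φ t| ≤ 1 + C := by
  have hC0 : 0 ≤ C := (abs_nonneg _).trans (hC 1 (mem_Ioi.2 one_pos))
  intro t (ht : 0 < t)
  rcases le_or_gt t 1 with ht1 | ht1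
  · rw [abs_mul, abs_of_pos ht]
    nlinarith [hφ t, abs_nonneg (φ t)]
  · calc |t * φ t| ≤ t * |t * φ t| := le_mul_of_one_le_left (abs_nonneg _) ht1.le
      _ = |t ^ 2 * φ t| := by
          rw [abs_mul, abs_mul, abs_of_pos ht, abs_of_pos (pow_pos ht 2)]
          ring
      _ ≤ 1 + C := by linarith [hC t ht]

/-- If `Y > 0` with `y² P(Y ≥ y) → 1` as `y → ∞`, then
`I_2(u) = E[Y² e^{-uY}]` satisfies `I_2(u) = -2 log u + o(log(1/u))` as `u → 0⁺`,
i.e. `I_2(u) / (2 log(1/u)) → 1`. -/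
theorem stmt_14 {Ω : Type*} [MeasurableSpace Ω] (P : Measure Ω) [IsProbabilityMeasure P]
    (Y : Ω → ℝ) (hmeas : Measurable Y) (hpos : ∀ᵐ ω ∂P, 0 < Y ω)
    (htail : Tendsto (fun y : ℝ => y ^ 2 * (P {ω | y ≤ Y ω}).toReal) atTop (nhds 1)) :
    Tendsto (fun u : ℝ =>
        (∫ ω, (Y ω) ^ 2 * Real.exp (-u * Y ω) ∂P) / (2 * Real.log (1 / u)))
      (nhdsWithin 0 (Set.Ioi 0)) (nhds 1) := by
  set φ : ℝ → ℝ := fun t => P.real {ω | t ≤ Y ω}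
  have hφ : ∀ t, |φ t| ≤ 1 := fun t => by
    rw [abs_of_nonneg measureReal_nonneg]
    exact measureReal_le_one
  obtain ⟨C, hC⟩ := exists_abs_sq_mul_le hφ htail
  have hK := abs_mul_le_of_abs_sq_mul_le hφ hC
  have hA := isLittleO_integral_mul_exp_neg_mul_sub_log (f := fun t => t * φ t)
    (measurable_id.mul measurable_measureReal_setOf_le) hK
    (htail.congr fun t => by rw [← mul_assoc, ← sq]; rfl)
  have hB := isLittleO_log_one_div_of_abs_le
    (F := fun u => u * ∫ t in Ioi 0, t ^ 2 * φ t * exp (-u * t))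
    (eventually_mem_nhdsWithin.mono fun u hu => abs_mul_integral_mul_exp_neg_mul_le hu hC)
  have hI : (fun u => (∫ ω, Y ω ^ 2 * exp (-u * Y ω) ∂P) - 2 * log (1 / u)) =o[𝓝[>] 0]
      fun u => 2 * log (1 / u) := by
    refine (((hA.const_mul_left 2).sub hB).const_mul_right two_ne_zero).congr' ?_ EventuallyEq.rfl
    filter_upwards [self_mem_nhdsWithin] with u (hu : 0 < u)
    rw [integral_sq_mul_exp_neg_mul_eq hmeas.aemeasurable (hpos.mono fun _ h => h.le) hu hK hC]
    ring
  have hL : ∀ᶠ u in 𝓝[>] (0 : ℝ), 2 * log (1 / u) ≠ 0 :=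
    (tendsto_log_one_div_nhdsGT_zero.eventually_gt_atTop 0).mono fun u hu => by positivity
  exact (isEquivalent_iff_tendsto_one hL).1 hI
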